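/- arXiv:2012.13732 — 2 statements merged into one kernel-verified Lean document; each statement's English description precedes it below -/
import Mathlib

section
/- Let μ = (d_1^{p_1},…,d_s^{p_s},0^{p_{s+1}}) ∈ P_n with d_1 > ⋯ > d_s > 0 and let λ ∈ P_n. Then: (a) λ ≤ μ and λ ≠ μ if and only if λ ≤ μ∖e_i for some i ∈ [s]; (b) for every nonempty F ⊆ [s], λ ≤ μ∖e_i for all i ∈ F if and only if λ ≤ μ∖e_F. Consequently, if I = ⟨λ^1,…,λ^r⟩_{S_n} and G_i = {j ∈ [r] : λ^j ≤ μ∖e_i} for i ∈ [s], then a nonempty F ⊆ [s] satisfies ∩_{i∈F} G_i ≠ ∅ if and only if μ∖e_F ∈ P(I), i.e. F ∈ Δ^{μ,0}(I); thus the nonempty faces of the nerve of G_1,…,G_s coincide with the nonempty faces of Δ^{μ,0}(I). -/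
/-!
`μ ∖ e_F` differs from `μ` only at the last entry of each block `k ∈ F`, which drops by one.
Hence `λ ≤ μ ∖ e_F` iff `λ ≤ μ ∖ e_k` for every `k ∈ F`, and if `λ ≤ μ` with `λ_t < μ_t` for
some `t` in block `k`, then `λ` is already strictly below `μ` at the last entry of that block,
as `λ` is weakly decreasing, so `λ ≤ μ ∖ e_k`. For the ideal, a monomial `x^a` lies in
`⟨λ^1, …, λ^r⟩_{S_n}` iff `σ(λ^j) ≤ a` for some `j` and `σ`; when `a` and `λ^j` are both weakly
decreasing this forces `λ^j ≤ a` by a pigeonhole argument.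
-/

open scoped BigOperators

noncomputable section
open Classical

/-! ## Generic (labeled) simplicial chain complexes and reduced homology over a field -/

section Homology

variable (K : Type) [Field K] {α : Type}

/-- Index type for chains: elements of `S` whose face (second component) has `j` elements. -/
def ChainIdx (S : Set (α × Finset ℕ)) (j : ℕ) : Type :=
  {q : α × Finset ℕ // q ∈ S ∧ q.2.card = j}

/-- The boundary of a basis element, with the usual simplicial signs. -/
noncomputable def bdElt (S : Set (α × Finset ℕ)) (j : ℕ) (q : ChainIdx S (j + 1)) :
    ChainIdx S j →₀ K :=
  ∑ v ∈ q.1.2,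
    if h : (q.1.1, q.1.2.erase v) ∈ S ∧ (q.1.2.erase v).card = j then
      ((-1 : K) ^ (q.1.2.filter (fun u => u ≤ v)).card) •
        Finsupp.single (⟨(q.1.1, q.1.2.erase v), h⟩ : ChainIdx S j) (1 : K)
    else 0

/-- The simplicial boundary map. -/
noncomputable def bd (S : Set (α × Finset ℕ)) (j : ℕ) :
    (ChainIdx S (j + 1) →₀ K) →ₗ[K] (ChainIdx S j →₀ K) :=
  Finsupp.linearCombination K (bdElt K S j)

/-- Cycles in homological degree `j` (chains are indexed by the cardinality of faces;
degree `j` corresponds to reduced topological degree `j - 1`). -/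
noncomputable def cycles (S : Set (α × Finset ℕ)) : (j : ℕ) → Submodule K (ChainIdx S j →₀ K)
  | 0 => ⊤
  | (i + 1) => LinearMap.ker (bd K S i)

/-- `rhd K S j` is the dimension of the reduced homology group `H̃_{j-1}` of the complex `S`
(the chain groups being finite dimensional, this is `dim` cycles `- dim` boundaries). -/
noncomputable def rhd (S : Set (α × Finset ℕ)) (j : ℕ) : ℕ :=
  Module.finrank K (cycles K S j) -
    Module.finrank K (LinearMap.range (bd K S j) ⊓ cycles K S j : Submodule K _)

/-- `hdim K S j = dim_K H̃_j(S; K)`, for `j : ℤ` (zero for `j ≤ -2`). -/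
noncomputable def hdim (S : Set (α × Finset ℕ)) (j : ℤ) : ℕ :=
  if 0 ≤ j + 1 then rhd K S (j + 1).toNat else 0

/-- View an unlabeled collection of faces as a labeled one (labels in `Unit`). -/
def lab (Δ : Set (Finset ℕ)) : Set (Unit × Finset ℕ) := {q | q.2 ∈ Δ}

/-- Dimension of reduced homology `H̃_{j-1}(Δ; K)` of a collection `Δ` of finite sets. -/
noncomputable def rhd0 (Δ : Set (Finset ℕ)) (j : ℕ) : ℕ := rhd K (lab Δ) j

/-- Dimension of reduced homology `H̃_j(Δ; K)`, `j : ℤ`. -/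
noncomputable def hdim0 (Δ : Set (Finset ℕ)) (j : ℤ) : ℕ := hdim K (lab Δ) j

end Homology

/-! ## Monomial ideals in `k[x_1, …, x_n]`, invariant under the symmetric group -/

section Poly

variable (K : Type) [Field K] (n : ℕ)

/-- The monomial `x^a` in `k[x_1, …, x_n]`. -/
noncomputable def mon (a : Fin n → ℕ) : MvPolynomial (Fin n) K :=
  MvPolynomial.monomial (Finsupp.equivFunOnFinite.symm a) 1

/-- A monomial ideal: an ideal generated by a set of monomials. -/
def IsMonomialIdeal (I : Ideal (MvPolynomial (Fin n) K)) : Prop :=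
  ∃ S : Set (Fin n → ℕ), I = Ideal.span (mon K n '' S)

/-- `I` is invariant under the action of `S_n` permuting the variables. -/
def IsSymmetricIdeal (I : Ideal (MvPolynomial (Fin n) K)) : Prop :=
  ∀ σ : Equiv.Perm (Fin n), Ideal.map (MvPolynomial.rename σ).toRingHom I = I

end Poly

/-! ## Partitions given by blocks `(d_1^{p_1}, …, d_s^{p_s}, 0^{p_{s+1}})` -/

section Blocks

/-- `cumsum p k = p 0 + ⋯ + p (k-1)`. -/
def cumsum (p : ℕ → ℕ) (k : ℕ) : ℕ := ∑ j ∈ Finset.range k, p j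

/-- The index of the block (among blocks `0, …, s`) containing position `i`,
for blocks of sizes `p 0, …, p (s-1)` followed by a final block. -/
def blkOf (p : ℕ → ℕ) (s i : ℕ) : ℕ :=
  ((Finset.range s).filter fun k => cumsum p (k + 1) ≤ i).card

/-- The partition `μ = (d_0^{p_0}, …, d_{s-1}^{p_{s-1}}, 0^{p_s})` (0-indexed blocks),
as a function of the position `i ∈ {0, …, n-1}` where `n = cumsum p (s+1)`. -/
def muOf (s : ℕ) (d p : ℕ → ℕ) (i : ℕ) : ℕ :=
  if blkOf p s i < s then d (blkOf p s i) else 0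

/-- The partition `μ ∖ c`, obtained from `μ` by replacing, for each `k`, the last `c k` of
the parts equal to `d k` by `d k - 1`. -/
def muMinus (s : ℕ) (d p c : ℕ → ℕ) (i : ℕ) : ℕ :=
  if blkOf p s i < s then
    (if p (blkOf p s i) - c (blkOf p s i) ≤ i - cumsum p (blkOf p s i) then
      d (blkOf p s i) - 1 else d (blkOf p s i))
  else 0

/-- Indicator vector of a finite set `F`. -/
def eF (F : Finset ℕ) (j : ℕ) : ℕ := if j ∈ F then 1 else 0

end Blocks

/-! ## The simplicial complexes `Δ^{μ,c}(I)` and `Γ^{μ,c}(I)` -/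

section Complexes

variable (K : Type) [Field K] (n : ℕ)

/-- The simplicial complex `Δ^{μ,c}(I) = {F ⊆ [s] : μ ∖ (c + e_F) ∈ P(I)}` (vertices are
`0, …, s-1`), for `μ = (d_0^{p_0}, …, d_{s-1}^{p_{s-1}}, 0^{p_s})` and `c ≤ p(μ)`. -/
def DeltaCx (I : Ideal (MvPolynomial (Fin n) K)) (s : ℕ) (d p c : ℕ → ℕ) :
    Set (Finset ℕ) :=
  {F | F ⊆ Finset.range s ∧
    mon K n (fun i => muMinus s d p (fun j => c j + eF F j) i.val) ∈ I}

/-- The Alexander dual complex `Γ^{μ,c}(I) = {F ⊆ [s] : μ ∖ (c + e_{[s]∖F}) ∈ O(I)}`. -/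
def GammaCx (I : Ideal (MvPolynomial (Fin n) K)) (s : ℕ) (d p c : ℕ → ℕ) :
    Set (Finset ℕ) :=
  {F | F ⊆ Finset.range s ∧
    mon K n (fun i => muMinus s d p
      (fun j => c j + (if j < s ∧ j ∉ F then 1 else 0)) i.val) ∉ I}

/-- `γ_i^{μ,c}(I) = dim_K H̃_{i-1}(Δ^{μ,c}(I); K)`. -/
noncomputable def gammaDim (I : Ideal (MvPolynomial (Fin n) K)) (s : ℕ) (d p c : ℕ → ℕ)
    (i : ℕ) : ℕ :=
  rhd0 K (DeltaCx K n I s d p c) i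

end Complexes

/-! ## Multigraded Tor via the Koszul complex

For a monomial ideal `I`, the multidegree-`a` strand of the Koszul complex `K_•(I)` is the
(shifted) reduced chain complex of the simplicial complex
`Δ_a^I = {F ⊆ [n] : a - e_F ≥ 0, x^{a - e_F} ∈ I}`, so that
`dim_K Tor_i(I, K)_a = dim_K H̃_{i-1}(Δ_a^I; K)`, and similarly for `R/I` with the
condition `x^{a-e_F} ∉ I`. -/

section Tor

variable (K : Type) [Field K] (n : ℕ)

/-- The Koszul simplicial complex of the ideal `I` in multidegree `a`. -/
def KosI (I : Ideal (MvPolynomial (Fin n) K)) (a : Fin n → ℕ) : Set (Finset ℕ) :=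
  {F | F ⊆ Finset.range n ∧ (∀ i : Fin n, (i : ℕ) ∈ F → 1 ≤ a i) ∧
    mon K n (fun i => a i - eF F i.val) ∈ I}

/-- The Koszul complex of `R/I` in multidegree `a`. -/
def KosQ (I : Ideal (MvPolynomial (Fin n) K)) (a : Fin n → ℕ) : Set (Finset ℕ) :=
  {F | F ⊆ Finset.range n ∧ (∀ i : Fin n, (i : ℕ) ∈ F → 1 ≤ a i) ∧
    mon K n (fun i => a i - eF F i.val) ∉ I}

/-- `dim_K Tor_i(I, K)_a`, for a monomial ideal `I` and a multidegree `a ∈ ℤ^n`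
(components with a negative coordinate vanish, so only `a ∈ ℕ^n` is needed). -/
noncomputable def torDim (I : Ideal (MvPolynomial (Fin n) K)) (i : ℕ) (a : Fin n → ℕ) : ℕ :=
  rhd0 K (KosI K n I a) i

/-- `dim_K Tor_i(R/I, K)_a` for a monomial ideal `I`. -/
noncomputable def torQDim (I : Ideal (MvPolynomial (Fin n) K)) (i : ℕ) (a : Fin n → ℕ) : ℕ :=
  rhd0 K (KosQ K n I a) i

/-- `dim_K Tor_i(I, K)_{⟨μ⟩}`: the sum of `dim_K Tor_i(I, K)_a` over all rearrangements `a`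
of the partition `μ`. -/
noncomputable def torDimSym (I : Ideal (MvPolynomial (Fin n) K)) (i : ℕ) (μ : Fin n → ℕ) : ℕ :=
  ∑ a ∈ Finset.image (fun σ : Equiv.Perm (Fin n) => μ ∘ σ) Finset.univ, torDim K n I i a

/-- `dim_K Tor_i(R/I, K)_{⟨μ⟩}`. -/
noncomputable def torQDimSym (I : Ideal (MvPolynomial (Fin n) K)) (i : ℕ) (μ : Fin n → ℕ) : ℕ :=
  ∑ a ∈ Finset.image (fun σ : Equiv.Perm (Fin n) => μ ∘ σ) Finset.univ, torQDim K n I i a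

end Tor

/-! ## Extended partitions in `P_n^∞` and the dual generators of an `S_n`-invariant
monomial ideal -/

section ExtendedPartitions

variable (K : Type) [Field K] (n : ℕ)

/-- `ℓ(μ)`: the number of entries of `μ ∈ P_n^∞` equal to `∞`. -/
def ellInf (μ : Fin n → ℕ∞) : ℕ := (Finset.univ.filter fun i => μ i = ⊤).card

/-- The largest finite entry of `μ ∈ P_n^∞` (i.e. the first finite entry, `μ` being
weakly decreasing). -/
def topVal (μ : Fin n → ℕ∞) : ℕ := Finset.univ.sup fun i => (μ i).toNat

/-- `μ^+ ∈ P_n`: each `∞` entry of `μ` is replaced by (largest finite entry)` + 1`. -/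
def plusOf (μ : Fin n → ℕ∞) (i : Fin n) : ℕ :=
  if μ i = ⊤ then topVal n μ + 1 else (μ i).toNat

/-- `μ̃ = μ^+ + (0^{ℓ(μ)}, 1^{n - ℓ(μ)}) ∈ P_n`. -/
def tildeOf (μ : Fin n → ℕ∞) (i : Fin n) : ℕ :=
  if μ i = ⊤ then topVal n μ + 1 else (μ i).toNat + 1

/-- The ideal `Q_μ = ∩_{σ ∈ S_n} σ((x_k^{μ_k + 1}, …, x_n^{μ_n + 1}))`, where
`μ_k, …, μ_n` are the finite entries of `μ ∈ P_n^∞`. -/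
noncomputable def Qgen (μ : Fin n → ℕ∞) : Ideal (MvPolynomial (Fin n) K) :=
  ⨅ σ : Equiv.Perm (Fin n),
    Ideal.map (MvPolynomial.rename σ).toRingHom
      (Ideal.span {g | ∃ i : Fin n, μ i ≠ ⊤ ∧ g = MvPolynomial.X i ^ ((μ i).toNat + 1)})

/-- `Λ` is the (finite) set of dual generators of `I`, i.e. `I = ∩_{μ ∈ Λ} Q_μ` is the
irredundant presentation of `I` by ideals `Q_μ`. -/
def IsDualPresentation (I : Ideal (MvPolynomial (Fin n) K))
    (Λ : Finset (Fin n → ℕ∞)) : Prop :=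
  (∀ μ ∈ Λ, Antitone μ) ∧ (I = ⨅ μ ∈ Λ, Qgen K n μ) ∧
    ∀ μ ∈ Λ, I ≠ ⨅ ρ ∈ Λ, ⨅ _ : ρ ≠ μ, Qgen K n ρ

/-- The partial order `≼` on dual generators: `μ ≼ ρ` iff `μ̃ ≤ ρ̃` (componentwise) and
`ℓ(μ) - ℓ(ρ) ≤ |ρ̃| - |μ̃|`. -/
def preceq (μ ρ : Fin n → ℕ∞) : Prop :=
  (∀ i, tildeOf n μ i ≤ tildeOf n ρ i) ∧
    (∑ i, tildeOf n μ i) + ellInf n μ ≤ (∑ i, tildeOf n ρ i) + ellInf n ρ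

/-- The extended partition `ρ = (∞^{p_0}, d_1^{p_1}, …, d_s^{p_s}) ∈ P_n^∞`
(so `n = p 0 + p 1 + ⋯ + p s`), as a function of the position `i ∈ {0, …, n-1}`. -/
def rhoOf (s : ℕ) (d p : ℕ → ℕ) (i : ℕ) : ℕ∞ :=
  if blkOf p (s + 1) i = 0 then ⊤ else ((d (blkOf p (s + 1) i) : ℕ) : ℕ∞)

end ExtendedPartitions

/-- The `S_n`-invariant monomial ideal `⟨λ^1, …, λ^r⟩_{S_n}` generated by the
partitions `L 0, …, L (r-1)`. -/
def symIdeal (K : Type) [Field K] (n r : ℕ) (L : Fin r → Fin n → ℕ) :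
    Ideal (MvPolynomial (Fin n) K) :=
  Ideal.span {f | ∃ (j : Fin r) (σ : Equiv.Perm (Fin n)),
    f = MvPolynomial.rename σ (mon K n (L j))}

theorem Antitone.le_of_comp_perm_le {ι β : Type*} [LinearOrder ι] [LocallyFiniteOrderTop ι]
    [Preorder β] {a b : ι → β} (ha : Antitone a) (hb : Antitone b) (σ : Equiv.Perm ι)
    (h : b ∘ σ ≤ a) : b ≤ a := by
  intro t
  -- pigeonhole: `σ` cannot map `Ici t` into the smaller set `Ioi t`
  obtain ⟨u, htu, hσu⟩ : ∃ u, t ≤ u ∧ σ u ≤ t := by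
    by_contra! hc
    have hmaps : (Finset.Ici t).image σ ⊆ Finset.Ioi t := by
      simpa [Finset.image_subset_iff] using hc
    have hcard := Finset.card_le_card hmaps
    rw [Finset.card_image_of_injective _ σ.injective,
      Finset.card_Ioi_eq_card_Ici_sub_one] at hcard
    have : 0 < (Finset.Ici t).card := Finset.card_pos.2 ⟨t, Finset.mem_Ici.2 le_rfl⟩
    omega
  calc b t ≤ b (σ u) := hb hσu
    _ ≤ a u := h u
    _ ≤ a t := ha htu

section Blocks

variable (p : ℕ → ℕ) (s : ℕ)

theorem cumsum_succ (k : ℕ) : cumsum p (k + 1) = cumsum p k + p k :=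
  Finset.sum_range_succ p k

theorem cumsum_mono : Monotone (cumsum p) := fun _ _ h =>
  Finset.sum_le_sum_of_subset (Finset.range_subset_range.2 h)

theorem blkOf_eq {i k : ℕ} (hks : k ≤ s) (hk : cumsum p k ≤ i)
    (hk' : k < s → i < cumsum p (k + 1)) : blkOf p s i = k := by
  have : (Finset.range s).filter (fun j => cumsum p (j + 1) ≤ i) = Finset.range k := by
    ext j
    simp only [Finset.mem_filter, Finset.mem_range]
    constructor
    · rintro ⟨hjs, hji⟩
      by_contra! hkj
      exact absurd (cumsum_mono p (by omega : k + 1 ≤ j + 1) |>.trans hji)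
        (not_le.2 (hk' (by omega)))
    · intro hjk
      exact ⟨by omega, (cumsum_mono p (by omega : j + 1 ≤ k)).trans hk⟩
  rw [blkOf, this, Finset.card_range]

theorem blkOf_spec (i : ℕ) :
    blkOf p s i ≤ s ∧ cumsum p (blkOf p s i) ≤ i ∧
      (blkOf p s i < s → i < cumsum p (blkOf p s i + 1)) := by
  set k := Nat.findGreatest (fun k => cumsum p k ≤ i) s
  have hk : cumsum p k ≤ i := Nat.findGreatest_spec (P := fun k => cumsum p k ≤ i)
    (Nat.zero_le s) (by simp [cumsum])
  have hk' : k < s → i < cumsum p (k + 1) := fun hks => not_le.1 <|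
    Nat.findGreatest_is_greatest (P := fun k => cumsum p k ≤ i) (Nat.lt_succ_self k) hks
  rw [blkOf_eq p s (Nat.findGreatest_le s) hk hk']
  exact ⟨Nat.findGreatest_le s, hk, hk'⟩

theorem blkOf_mono : Monotone (blkOf p s) := fun _ _ h =>
  Finset.card_le_card (Finset.monotone_filter_right _ fun _ _ hk => hk.trans h)

end Blocks

section Partitions

variable (s : ℕ) (d p : ℕ → ℕ)

theorem blkOf_cumsum_succ_sub_one {k : ℕ} (hks : k < s) (hk : 0 < p k) :
    blkOf p s (cumsum p (k + 1) - 1) = k := by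
  refine blkOf_eq p s hks.le ?_ fun _ => ?_ <;> rw [cumsum_succ] <;> omega

theorem muMinus_le_muOf (c : ℕ → ℕ) (i : ℕ) : muMinus s d p c i ≤ muOf s d p i := by
  unfold muMinus muOf
  split_ifs <;> omega

/-- Subtracting `e_F` lowers exactly the last entry of each block `k ∈ F`. -/
theorem muMinus_eF (F : Finset ℕ) (i : ℕ) :
    muMinus s d p (eF F) i =
      if blkOf p s i ∈ F ∧ cumsum p (blkOf p s i + 1) = i + 1 then muOf s d p i - 1
      else muOf s d p i := by
  obtain ⟨-, hlo, hhi⟩ := blkOf_spec p s i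
  rw [cumsum_succ] at hhi ⊢
  unfold muMinus muOf eF
  by_cases hb : blkOf p s i < s
  · have := hhi hb
    by_cases hF : blkOf p s i ∈ F <;>
      simp only [hF, hb, true_and, false_and, ↓reduceIte, Nat.sub_zero] <;> split_ifs <;> omega
  · simp [hb]

theorem eF_singleton (k : ℕ) : eF {k} = fun u => if u = k then 1 else 0 := by
  funext u
  simp [eF]

theorem le_muMinus_eF_iff {F : Finset ℕ} (hF : F.Nonempty) (i x : ℕ) :
    x ≤ muMinus s d p (eF F) i ↔ ∀ k ∈ F, x ≤ muMinus s d p (eF {k}) i := by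
  obtain ⟨k₀, hk₀⟩ := hF
  simp only [muMinus_eF, Finset.mem_singleton]
  constructor
  · intro hx k hk
    split_ifs at hx ⊢ <;> grind
  · intro hx
    split_ifs with h
    · simpa [h.2] using hx _ h.1
    · have := hx k₀ hk₀
      split_ifs at this <;> omega

theorem muMinus_antitone (hd : ∀ k, k + 1 < s → d (k + 1) < d k) (c : ℕ → ℕ) :
    Antitone (muMinus s d p c) := by
  have hd' : StrictAntiOn d (Set.Iic (s - 1)) :=
    strictAntiOn_Iic_of_succ_lt fun m hm => hd m (by omega)
  intro i i' hii'
  obtain ⟨-, hlo, -⟩ := blkOf_spec p s i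
  have hb := blkOf_mono p s hii'
  unfold muMinus
  by_cases hb' : blkOf p s i' < s
  · rcases hb.lt_or_eq with hlt | heq
    · have : d (blkOf p s i') < d (blkOf p s i) :=
        hd' (show blkOf p s i ≤ s - 1 by omega) (show blkOf p s i' ≤ s - 1 by omega) hlt
      split_ifs <;> omega
    · rw [← heq]
      split_ifs <;> omega
  · simp [hb']

end Partitions

section SymmetricIdeal

variable (K : Type) [Field K] {n r : ℕ} (L : Fin r → Fin n → ℕ)

theorem symIdeal_eq_span_monomial :
    symIdeal K n r L = Ideal.span ((fun m => MvPolynomial.monomial m (1 : K)) ''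
      {m | ∃ (j : Fin r) (σ : Equiv.Perm (Fin n)),
        m = Finsupp.equivFunOnFinite.symm (L j ∘ σ)}) := by
  have hrename (σ : Equiv.Perm (Fin n)) (b : Fin n → ℕ) :
      MvPolynomial.rename σ (mon K n b) =
        MvPolynomial.monomial (Finsupp.equivFunOnFinite.symm (b ∘ σ.symm)) 1 := by
    rw [mon, MvPolynomial.rename_monomial]
    refine congrArg (MvPolynomial.monomial · 1) ?_
    ext i
    simp [Finsupp.mapDomain_equiv_apply]
  rw [symIdeal]
  congr 1
  ext f
  simp only [Set.mem_ofPred_eq, Set.mem_image, hrename]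
  constructor
  · rintro ⟨j, σ, rfl⟩
    exact ⟨_, ⟨j, σ.symm, rfl⟩, rfl⟩
  · rintro ⟨m, ⟨j, σ, rfl⟩, rfl⟩
    exact ⟨j, σ.symm, by rw [Equiv.symm_symm]⟩

theorem mon_mem_symIdeal_iff (a : Fin n → ℕ) :
    mon K n a ∈ symIdeal K n r L ↔ ∃ (j : Fin r) (σ : Equiv.Perm (Fin n)), L j ∘ σ ≤ a := by
  rw [symIdeal_eq_span_monomial, MvPolynomial.mem_ideal_span_monomial_image, mon,
    MvPolynomial.support_monomial, if_neg one_ne_zero]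
  simp [Finsupp.le_def, Pi.le_def]

theorem mon_mem_symIdeal_iff_of_antitone (hL : ∀ j, Antitone (L j)) {a : Fin n → ℕ}
    (ha : Antitone a) : mon K n a ∈ symIdeal K n r L ↔ ∃ j, ∀ i, L j i ≤ a i := by
  rw [mon_mem_symIdeal_iff]
  exact ⟨fun ⟨j, σ, h⟩ => ⟨j, ha.le_of_comp_perm_le (hL j) σ h⟩,
    fun ⟨j, h⟩ => ⟨j, 1, h⟩⟩

end SymmetricIdeal

section Faces

variable {s : ℕ} {d p : ℕ → ℕ} {n : ℕ}

theorem le_muMinus_eF_blkOf {lam : Fin n → ℕ} (hlam : Antitone lam)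
    (hle : ∀ t : Fin n, lam t ≤ muOf s d p t) {t : Fin n} (ht : lam t < muOf s d p t)
    (t' : Fin n) : lam t' ≤ muMinus s d p (eF {blkOf p s t}) t' := by
  rw [muMinus_eF]
  split_ifs with h
  · obtain ⟨hb, hlast⟩ := h
    rw [Finset.mem_singleton] at hb
    have hts : blkOf p s t < s := by
      by_contra hts
      simp [muOf, hts] at ht
    have htt' : t ≤ t' := by
      have := (blkOf_spec p s t).2.2 hts
      rw [hb] at hlast
      change (t : ℕ) ≤ t'
      omega
    have hmu : muOf s d p t' = muOf s d p t := by simp only [muOf, hb]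
    have := hlam htt'
    omega
  · exact hle t'

theorem muMinus_eF_singleton_lt_muOf {k : ℕ} (hk : k < s) (hdk : 0 < d k) (hpk : 0 < p k) :
    muMinus s d p (eF {k}) (cumsum p (k + 1) - 1) < muOf s d p (cumsum p (k + 1) - 1) := by
  have hb := blkOf_cumsum_succ_sub_one s p hk hpk
  have hpos : 1 ≤ cumsum p (k + 1) := by rw [cumsum_succ]; omega
  have hmu : muOf s d p (cumsum p (k + 1) - 1) = d k := by simp [muOf, hb, hk]
  rw [muMinus_eF, if_pos ⟨by simp [hb], by rw [hb]; omega⟩, hmu]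
  omega

theorem le_muOf_and_ne_iff_exists_le_muMinus (hn : cumsum p s ≤ n)
    (hdpos : ∀ k, k < s → 0 < d k) (hppos : ∀ k, k < s → 0 < p k) {lam : Fin n → ℕ}
    (hlam : Antitone lam) :
    ((∀ t, lam t ≤ muOf s d p t.val) ∧ lam ≠ fun t => muOf s d p t.val) ↔
      ∃ k < s, ∀ t : Fin n, lam t ≤ muMinus s d p (eF {k}) t := by
  constructor
  · rintro ⟨hle, hne⟩
    obtain ⟨t, htne⟩ : ∃ t, lam t ≠ muOf s d p t := Function.ne_iff.1 hne
    have ht : lam t < muOf s d p t := (hle t).lt_of_ne htne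
    refine ⟨blkOf p s t, ?_, le_muMinus_eF_blkOf hlam hle ht⟩
    by_contra hts
    simp [muOf, hts] at ht
  · rintro ⟨k, hk, hlam_le⟩
    refine ⟨fun t => (hlam_le t).trans (muMinus_le_muOf s d p _ t), fun heq => ?_⟩
    have hlast : cumsum p (k + 1) ≤ cumsum p s := cumsum_mono p hk
    have hpos : 1 ≤ cumsum p (k + 1) := by rw [cumsum_succ]; have := hppos k hk; omega
    have hlt := muMinus_eF_singleton_lt_muOf hk (hdpos k hk) (hppos k hk)
    have h₁ := hlam_le ⟨cumsum p (k + 1) - 1, by omega⟩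
    have h₂ := congrFun heq ⟨cumsum p (k + 1) - 1, by omega⟩
    dsimp only at h₁ h₂
    omega

theorem forall_le_muMinus_eF_singleton_iff {F : Finset ℕ} (hF : F.Nonempty) (lam : Fin n → ℕ) :
    (∀ k ∈ F, ∀ t : Fin n, lam t ≤ muMinus s d p (eF {k}) t) ↔
      ∀ t : Fin n, lam t ≤ muMinus s d p (eF F) t :=
  ⟨fun h t => (le_muMinus_eF_iff s d p hF _ _).2 fun k hk => h k hk t,
    fun h k hk t => (le_muMinus_eF_iff s d p hF _ _).1 (h t) k hk⟩

end Faces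

/-- Let `μ = (d_1^{p_1}, …, d_s^{p_s}, 0^{p_{s+1}}) ∈ P_n` with
`d_1 > ⋯ > d_s > 0` and `λ ∈ P_n`.  Then: (a) `λ ≤ μ` and `λ ≠ μ` iff `λ ≤ μ∖e_k` for
some `k ∈ [s]`; (b) for nonempty `F ⊆ [s]`, `λ ≤ μ∖e_k` for all `k ∈ F` iff `λ ≤ μ∖e_F`;
consequently, for `I = ⟨λ^1, …, λ^r⟩_{S_n}` and `G_k = {j : λ^j ≤ μ∖e_k}`, a nonempty
`F ⊆ [s]` satisfies `∩_{k ∈ F} G_k ≠ ∅` iff `F ∈ Δ^{μ,0}(I)` (so the nonempty faces of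
the nerve of `G_1, …, G_s` are those of `Δ^{μ,0}(I)`).
(Vertices are indexed `0, …, s-1`.) -/
theorem statement_4 (K : Type) [Field K] (n : ℕ)
    (s : ℕ) (d p : ℕ → ℕ)
    (hn : n = cumsum p (s + 1))
    (hd : ∀ k, k + 1 < s → d (k + 1) < d k)
    (hdpos : ∀ k, k < s → 0 < d k)
    (hppos : ∀ k, k < s → 0 < p k)
    (lam : Fin n → ℕ) (hlam : Antitone lam)
    (r : ℕ) (L : Fin r → Fin n → ℕ) (hL : ∀ j, Antitone (L j)) :
    (((∀ t, lam t ≤ muOf s d p t.val) ∧ lam ≠ fun t => muOf s d p t.val) ↔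
        ∃ k < s, ∀ t : Fin n, lam t ≤ muMinus s d p (fun u => if u = k then 1 else 0) t.val) ∧
    (∀ F : Finset ℕ, F ⊆ Finset.range s → F.Nonempty →
      ((∀ k ∈ F, ∀ t : Fin n, lam t ≤ muMinus s d p (fun u => if u = k then 1 else 0) t.val) ↔
        ∀ t : Fin n, lam t ≤ muMinus s d p (eF F) t.val)) ∧
    (∀ F : Finset ℕ, F ⊆ Finset.range s → F.Nonempty →
      ((∃ j : Fin r, ∀ k ∈ F, ∀ t : Fin n,
          L j t ≤ muMinus s d p (fun u => if u = k then 1 else 0) t.val) ↔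
        F ∈ DeltaCx K n (symIdeal K n r L) s d p (fun _ => 0))) := by
  simp only [← eF_singleton]
  have hsn : cumsum p s ≤ n := hn ▸ cumsum_mono p s.le_succ
  refine ⟨le_muOf_and_ne_iff_exists_le_muMinus hsn hdpos hppos hlam,
    fun F _ hF => forall_le_muMinus_eF_singleton_iff hF lam, fun F hFs hF => ?_⟩
  have hanti : Antitone fun t : Fin n => muMinus s d p (eF F) t :=
    (muMinus_antitone s d p hd _).comp_monotone Fin.val_strictMono.monotone
  simp only [DeltaCx, Set.mem_ofPred_eq, zero_add, mon_mem_symIdeal_iff_of_antitone K L hL hanti,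
    hFs, true_and]
  exact exists_congr fun j => forall_le_muMinus_eF_singleton_iff hF (L j)
end
end

section
/- Let I ⊆ R be a nonzero, proper S_n-invariant monomial ideal and let ρ ∈ Λ*_max(I) be a maximal dual generator. Then for every μ ∈ Λ*(I) with μ ≠ ρ, one has ρ^ced+ ∉ O_μ, i.e. ρ^+ ≰ μ componentwise. (Here ρ^+ ∈ P_n and the comparison with μ ∈ P_n^∞ is componentwise, with ∞ largest.) -/
open scoped BigOperators

noncomputable section
open Classical

/-! Suppose `ρ^+ ≤ μ`. If every `∞` entry of `μ` is also one of `ρ`, then `ρ^+ ≤ μ^+`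
componentwise, which gives `ρ ≼ μ` and contradicts the maximality of `ρ`. Otherwise `μ` has an
`∞` where `ρ` is finite; both being weakly decreasing, this forces `ρ ≤ μ`, hence
`Q_μ ⊆ Q_ρ`, and `Q_ρ` would be redundant in the presentation of `I`. -/

section DualGenerators

variable {n : ℕ}

lemma toNat_le_plusOf (ν : Fin n → ℕ∞) (i : Fin n) : (ν i).toNat ≤ plusOf n ν i := by
  unfold plusOf
  split_ifs with h <;> simp [h]

lemma le_plusOf_of_ne_top {ν : Fin n → ℕ∞} {i : Fin n} {a : ℕ} (ha : (a : ℕ∞) ≤ ν i)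
    (hi : ν i ≠ ⊤) : a ≤ plusOf n ν i := by
  rw [plusOf, if_neg hi, ← ENat.natCast_le_natCast, ENat.natCast_toNat hi]
  exact ha

lemma sum_tildeOf_add_ellInf (ν : Fin n → ℕ∞) :
    (∑ i, tildeOf n ν i) + ellInf n ν = ∑ i, (plusOf n ν i + 1) := by
  rw [ellInf, Finset.card_filter, ← Finset.sum_add_distrib]
  refine Finset.sum_congr rfl fun i _ => ?_
  unfold tildeOf plusOf
  by_cases hi : ν i = ⊤ <;> simp [hi]

section PlusLe

variable {ρ μ : Fin n → ℕ∞} (hle : ∀ i, (plusOf n ρ i : ℕ∞) ≤ μ i)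
  (htop : ∀ i, μ i = ⊤ → ρ i = ⊤)
include hle htop

lemma topVal_le_topVal_of_plusOf_le : topVal n ρ ≤ topVal n μ := by
  refine Finset.sup_le fun i _ => ?_
  by_cases hμi : μ i = ⊤
  · simp [htop i hμi]
  · calc (ρ i).toNat ≤ plusOf n ρ i := toNat_le_plusOf ρ i
      _ ≤ (μ i).toNat := by rw [← ENat.natCast_le_natCast, ENat.natCast_toNat hμi]; exact hle i
      _ ≤ topVal n μ := Finset.le_sup (f := fun i => (μ i).toNat) (Finset.mem_univ i)

lemma plusOf_le_plusOf_of_plusOf_le (i : Fin n) : plusOf n ρ i ≤ plusOf n μ i := by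
  by_cases hμi : μ i = ⊤
  · have := topVal_le_topVal_of_plusOf_le hle htop
    simp only [plusOf, hμi, htop i hμi, if_true]
    omega
  · exact le_plusOf_of_ne_top (hle i) hμi

lemma tildeOf_le_tildeOf_of_plusOf_le (i : Fin n) : tildeOf n ρ i ≤ tildeOf n μ i := by
  have hplus := plusOf_le_plusOf_of_plusOf_le hle htop i
  unfold plusOf at hplus
  unfold tildeOf
  by_cases hμi : μ i = ⊤
  · simpa [hμi, htop i hμi] using hplus
  · by_cases hρi : ρ i = ⊤ <;> simp only [hρi, hμi, if_true, if_false] at hplus ⊢ <;> omega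

lemma preceq_of_plusOf_le : preceq n ρ μ := by
  refine ⟨tildeOf_le_tildeOf_of_plusOf_le hle htop, ?_⟩
  rw [sum_tildeOf_add_ellInf, sum_tildeOf_add_ellInf]
  exact Finset.sum_le_sum fun i _ => by
    have := plusOf_le_plusOf_of_plusOf_le hle htop i
    omega

end PlusLe

/-- As `μ j = ∞` and `ρ j < ∞`, monotonicity puts every finite entry of `μ` after `j`, where
`ρ` is finite too, so there `ρ^+` agrees with `ρ`. -/
lemma le_of_plusOf_le {ρ μ : Fin n → ℕ∞} (hρ : Antitone ρ) (hμ : Antitone μ)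
    (hle : ∀ i, (plusOf n ρ i : ℕ∞) ≤ μ i) {j : Fin n} (hjμ : μ j = ⊤) (hjρ : ρ j ≠ ⊤)
    (i : Fin n) : ρ i ≤ μ i := by
  by_cases hμi : μ i = ⊤
  · simp [hμi]
  · have hρi : ρ i ≠ ⊤ := by
      intro hρi
      rcases le_total i j with hij | hij
      · exact hμi (top_le_iff.mp (hjμ ▸ hμ hij))
      · exact hjρ (top_le_iff.mp (hρi ▸ hρ hij))
    simpa [plusOf, hρi, ENat.natCast_toNat hρi] using hle i

end DualGenerators

lemma Qgen_anti (K : Type) [Field K] (n : ℕ) {ρ μ : Fin n → ℕ∞}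
    (h : ∀ i, ρ i ≤ μ i) : Qgen K n μ ≤ Qgen K n ρ := by
  refine iInf_mono fun σ => Ideal.map_mono ?_
  rw [Ideal.span_le]
  rintro g ⟨i, hi, rfl⟩
  have hρi : ρ i ≠ ⊤ := fun ht => hi (top_le_iff.mp (ht ▸ h i))
  have hle : (ρ i).toNat ≤ (μ i).toNat := ENat.toNat_le_toNat (h i) hi
  have hpow : MvPolynomial.X (R := K) i ^ ((μ i).toNat + 1) =
      MvPolynomial.X i ^ ((μ i).toNat - (ρ i).toNat) * MvPolynomial.X i ^ ((ρ i).toNat + 1) := by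
    rw [← pow_add]; congr 1; omega
  rw [hpow]
  exact Ideal.mul_mem_left _ _ (Ideal.subset_span ⟨i, hρi, rfl⟩)

lemma IsDualPresentation.not_Qgen_le {K : Type} [Field K] {n : ℕ}
    {I : Ideal (MvPolynomial (Fin n) K)} {Λ : Finset (Fin n → ℕ∞)}
    (hpres : IsDualPresentation K n I Λ) {ρ μ : Fin n → ℕ∞} (hρ : ρ ∈ Λ) (hμ : μ ∈ Λ)
    (hne : μ ≠ ρ) : ¬ Qgen K n μ ≤ Qgen K n ρ := by
  intro hQ
  refine hpres.2.2 ρ hρ ?_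
  rw [hpres.2.1]
  refine le_antisymm (le_iInf₂ fun ν hν => le_iInf fun _ => iInf₂_le ν hν) ?_
  refine le_iInf₂ fun ν hν => ?_
  by_cases hνρ : ν = ρ
  · subst hνρ
    exact (iInf₂_le μ hμ).trans ((iInf_le _ hne).trans hQ)
  · exact (iInf₂_le ν hν).trans (iInf_le _ hνρ)

theorem statement_7_general (K : Type) [Field K] (n : ℕ) (I : Ideal (MvPolynomial (Fin n) K))
    (Λ : Finset (Fin n → ℕ∞)) (hpres : IsDualPresentation K n I Λ)
    (ρ : Fin n → ℕ∞) (hρ : ρ ∈ Λ) (hmax : ∀ μ ∈ Λ, preceq n ρ μ → μ = ρ)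
    (μ : Fin n → ℕ∞) (hμ : μ ∈ Λ) (hne2 : μ ≠ ρ) :
    ¬ ∀ i : Fin n, ((plusOf n ρ i : ℕ) : ℕ∞) ≤ μ i := by
  intro h
  by_cases htop : ∀ i, μ i = ⊤ → ρ i = ⊤
  · exact hne2 (hmax μ hμ (preceq_of_plusOf_le h htop))
  · push Not at htop
    obtain ⟨j, hjμ, hjρ⟩ := htop
    have hle := le_of_plusOf_le (hpres.1 ρ hρ) (hpres.1 μ hμ) h hjμ hjρ
    exact hpres.not_Qgen_le hρ hμ hne2 (Qgen_anti K n hle)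

/-- If `ρ ∈ Λ*_max(I)` is a maximal dual generator of a nonzero, proper
`S_n`-invariant monomial ideal `I`, then for every dual generator `μ ∈ Λ*(I)` with `μ ≠ ρ`
one has `ρ^+ ∉ O_μ`, i.e. `ρ^+ ≰ μ` componentwise (with `∞` largest). -/
theorem statement_7 (K : Type) [Field K] (n : ℕ) (I : Ideal (MvPolynomial (Fin n) K))
    (hmon : IsMonomialIdeal K n I) (hsym : IsSymmetricIdeal K n I)
    (hne : I ≠ ⊥) (hproper : I ≠ ⊤)
    (Λ : Finset (Fin n → ℕ∞)) (hpres : IsDualPresentation K n I Λ)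
    (ρ : Fin n → ℕ∞) (hρ : ρ ∈ Λ) (hmax : ∀ μ ∈ Λ, preceq n ρ μ → μ = ρ)
    (μ : Fin n → ℕ∞) (hμ : μ ∈ Λ) (hne2 : μ ≠ ρ) :
    ¬ ∀ i : Fin n, ((plusOf n ρ i : ℕ) : ℕ∞) ≤ μ i :=
  statement_7_general K n I Λ hpres ρ hρ hmax μ hμ hne2
end
end
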